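/- For μ > 0, z' ∈ ℝ, and y ≥ 0, the function g(z) = z − y·log z + (μ/2)(z − z')² on (0, ∞) attains its unique minimum at z* = (μz' − 1 + √((μz' − 1)² + 4μy)) / (2μ), provided y > 0; in particular z* > 0. -/

import Mathlib

/-!
Writing `z*` for the positive root of `μ z² + (1 - μ z') z = y`, the tangent-line bound
`log z ≤ log z* + (z - z*) / z*` turns `g z - g z*` into the first-order term
`(z - z*) (1 - y / z* + μ (z* - z'))`, which vanishes at the root, plus `(μ/2) (z - z*)²`.
-/

open Real

theorem add_sqrt_div_pos {a m c : ℝ} (ha : 0 < a) (hc : 0 < c) :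
    0 < (m + √(m ^ 2 + 4 * a * c)) / (2 * a) := by
  have hsqrt : |m| < √(m ^ 2 + 4 * a * c) := by
    rw [← sqrt_sq_eq_abs]
    exact sqrt_lt_sqrt (sq_nonneg m) (by nlinarith)
  have hnum : 0 < m + √(m ^ 2 + 4 * a * c) := by linarith [neg_abs_le m]
  positivity

theorem add_sqrt_div_sq_eq {a m c : ℝ} (ha : a ≠ 0) (hdisc : 0 ≤ m ^ 2 + 4 * a * c) :
    a * ((m + √(m ^ 2 + 4 * a * c)) / (2 * a)) ^ 2
      = m * ((m + √(m ^ 2 + 4 * a * c)) / (2 * a)) + c := by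
  have hsq : √(m ^ 2 + 4 * a * c) ^ 2 = m ^ 2 + 4 * a * c := sq_sqrt hdisc
  generalize √(m ^ 2 + 4 * a * c) = s at hsq ⊢
  field_simp
  linear_combination hsq

theorem sub_mul_log_add_sq_le {μ z' y w z : ℝ} (hy : 0 ≤ y) (hw : 0 < w) (hz : 0 < z)
    (hstat : μ * w ^ 2 = (μ * z' - 1) * w + y) :
    w - y * log w + μ / 2 * (w - z') ^ 2 + μ / 2 * (z - w) ^ 2
      ≤ z - y * log z + μ / 2 * (z - z') ^ 2 := by
  have hlog : y * (log z - log w) ≤ y * (z - w) / w := by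
    rw [← log_div hz.ne' hw.ne', mul_div_assoc, sub_div, div_self hw.ne']
    exact mul_le_mul_of_nonneg_left (log_le_sub_one_of_pos (div_pos hz hw)) hy
  have hfirst_order : (z - w) - y * (z - w) / w + μ * (z - w) * (w - z') = 0 := by
    field_simp
    linear_combination (z - w) * hstat
  linear_combination hlog - hfirst_order

/-- For `μ > 0`, `z' ∈ ℝ`, `y > 0`, the function
`g(z) = z - y log z + (μ/2)(z - z')²` on `(0, ∞)` attains its unique minimum at
`z* = (μz' - 1 + √((μz' - 1)² + 4μy)) / (2μ)`; in particular `z* > 0`. -/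
theorem z_update_unique_min (μ z' y : ℝ) (hμ : 0 < μ) (hy : 0 < y) :
    let zstar : ℝ := (μ * z' - 1 + Real.sqrt ((μ * z' - 1) ^ 2 + 4 * μ * y)) / (2 * μ)
    let g : ℝ → ℝ := fun z => z - y * Real.log z + (μ / 2) * (z - z') ^ 2
    0 < zstar ∧ ∀ z ∈ Set.Ioi (0 : ℝ), g zstar ≤ g z ∧ (z ≠ zstar → g zstar < g z) := by
  intro zstar g
  have hpos : 0 < zstar := add_sqrt_div_pos hμ hy
  have hbound : ∀ z > 0, g zstar + μ / 2 * (z - zstar) ^ 2 ≤ g z := fun z hz =>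
    sub_mul_log_add_sq_le hy.le hpos hz (add_sqrt_div_sq_eq hμ.ne' (by positivity))
  refine ⟨hpos, fun z hz => ⟨?_, fun hne => ?_⟩⟩
  · exact (le_add_of_nonneg_right (by positivity)).trans (hbound z hz)
  · have hgap : 0 < μ / 2 * (z - zstar) ^ 2 := by
      have := sub_ne_zero.mpr hne
      positivity
    linarith [hbound z hz]
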